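/- arXiv:2212.13749 — 2 statements merged into one kernel-verified Lean document; each statement's English description precedes it below -/
import Mathlib

section
/- Let G be a finite simple graph with edge set E and a ∈ ℝ^E. Then a lies on no hyperplane of the matching arrangement MA(G) if and only if ⟨a, χ_{M1}⟩ ≠ ⟨a, χ_{M2}⟩ for every pair of adjacent matchings M1 ≠ M2 of G. -/
open scoped symmDiff
open Classical

noncomputable section

variable {V : Type*}

/-- A matching of `G`: a set of edges of `G`, no two of which share a vertex. -/
def IsMatchingOf (G : SimpleGraph V) (M : Set (Sym2 V)) : Prop :=
  M ⊆ G.edgeSet ∧ ∀ e ∈ M, ∀ f ∈ M, e ≠ f → ∀ v : V, ¬(v ∈ e ∧ v ∈ f)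

/-- The indicator vector `χ_M ∈ ℝ^E` of a set `M` of edges. -/
def chi (G : SimpleGraph V) (M : Set (Sym2 V)) : G.edgeSet → ℝ :=
  fun e => if (e : Sym2 V) ∈ M then 1 else 0

/-- The standard inner product `⟨a, x⟩ = Σ_{e ∈ E} a_e x_e` on `ℝ^E`. -/
def dot (G : SimpleGraph V) [Fintype G.edgeSet] (a x : G.edgeSet → ℝ) : ℝ :=
  ∑ e, a e * x e

/-- `p` is a (nonempty) simple path, or a simple cycle of even length. -/
def IsSimplePathOrEvenCycle (G : SimpleGraph V) {u v : V} (p : G.Walk u v) : Prop :=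
  (p.IsPath ∧ 0 < p.length) ∨ ∃ h : v = u, (p.copy rfl h).IsCycle ∧ Even p.length

/-- `A` is the edge set of a simple path, or of a simple cycle of even length, in `G`. -/
def IsPathOrEvenCycleEdgeSet (G : SimpleGraph V) (A : Set (Sym2 V)) : Prop :=
  ∃ (u v : V) (p : G.Walk u v), IsSimplePathOrEvenCycle G p ∧ A = {e | e ∈ p.edges}

/-- Two matchings are adjacent if their symmetric difference is the edge set of a
simple path or of a simple cycle of even length. -/
def AdjacentMatchings (G : SimpleGraph V) (M1 M2 : Set (Sym2 V)) : Prop :=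
  IsMatchingOf G M1 ∧ IsMatchingOf G M2 ∧ IsPathOrEvenCycleEdgeSet G (M1 ∆ M2)

/-- The alternating sum `a e₁ - a e₂ + a e₃ - ⋯` over a list. -/
def altSum {α : Type*} (a : α → ℝ) : List α → ℝ
  | [] => 0
  | e :: l => a e - altSum a l

/-- Extension by zero of a vector `ℝ^E` to all of `Sym2 V`. -/
def extendE (G : SimpleGraph V) (a : G.edgeSet → ℝ) : Sym2 V → ℝ :=
  fun e => if h : e ∈ G.edgeSet then a ⟨e, h⟩ else 0

/-- `a` lies on no hyperplane of the matching arrangement `MA(G)`: every alternating sum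
along a simple path or an even simple cycle is nonzero. -/
def OffHyperplanes (G : SimpleGraph V) (a : G.edgeSet → ℝ) : Prop :=
  ∀ ⦃u v : V⦄ (p : G.Walk u v), IsSimplePathOrEvenCycle G p →
    altSum (extendE G a) p.edges ≠ 0

/-- `a` and `b` induce the same orientation on adjacent pairs of matchings. -/
def SameOrientation (G : SimpleGraph V) [Fintype G.edgeSet] (a b : G.edgeSet → ℝ) : Prop :=
  ∀ M1 M2 : Set (Sym2 V), AdjacentMatchings G M1 M2 →
    (dot G a (chi G M1) < dot G a (chi G M2) ↔ dot G b (chi G M1) < dot G b (chi G M2))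

/-- The matching polyhedron `P(G) ⊆ ℝ^E` of Edmonds. -/
def matchingPolyhedron (G : SimpleGraph V) [Fintype V] [Fintype G.edgeSet] :
    Set (G.edgeSet → ℝ) :=
  {x | (∀ e, 0 ≤ x e) ∧
       (∀ v : V, (∑ e : G.edgeSet, if v ∈ (e : Sym2 V) then x e else 0) ≤ 1) ∧
       ∀ (S : Finset V) (k : ℕ), S.card = 2 * k + 1 →
         (∑ e : G.edgeSet, if ∀ w ∈ (e : Sym2 V), w ∈ S then x e else 0) ≤ (k : ℝ)}

/-- The function `a` induces the relation `O` on adjacent matchings. -/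
def Induces (G : SimpleGraph V) [Fintype G.edgeSet] (a : G.edgeSet → ℝ)
    (O : Set (Sym2 V) → Set (Sym2 V) → Prop) : Prop :=
  ∀ M1 M2 : Set (Sym2 V), AdjacentMatchings G M1 M2 →
    (O M1 M2 ↔ dot G a (chi G M1) < dot G a (chi G M2))

/-- `O` is an LP-orientation: a relation on pairs of adjacent matchings induced by
some `a ∈ ℝ^E` lying on no hyperplane of `MA(G)`. -/
def IsLPOrientation (G : SimpleGraph V) [Fintype G.edgeSet]
    (O : Set (Sym2 V) → Set (Sym2 V) → Prop) : Prop :=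
  (∀ M1 M2, O M1 M2 → AdjacentMatchings G M1 M2) ∧
  ∃ a : G.edgeSet → ℝ, OffHyperplanes G a ∧ Induces G a O

/-!
Along a simple path or even cycle whose edge set is `M₁ ∆ M₂`, consecutive edges share a
vertex, so no matching contains both of them: the edges alternate between `M₁ \ M₂` and
`M₂ \ M₁`. Hence `⟨a, χ_{M₁} - χ_{M₂}⟩` is, up to sign, the alternating sum of `a` along the
walk. Conversely, the edges at even and at odd positions of such a walk form two distinct
adjacent matchings.
-/

theorem sum_map_mul_eq_mul_altSum {α : Type*} {s a : α → ℝ} {e : α} {l : List α}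
    (h : (e :: l).IsChain fun x y => s y = -s x) :
    ((e :: l).map fun x => s x * a x).sum = s e * altSum a (e :: l) := by
  induction l generalizing e with
  | nil => simp [altSum]
  | cons f t ih =>
    rw [List.isChain_cons_cons] at h
    rw [List.map_cons, List.sum_cons, ih h.2, h.1]
    simp only [altSum]
    ring

theorem abs_sum_map_mul_eq_abs_altSum {α : Type*} {s a : α → ℝ} {l : List α}
    (h : l.IsChain fun x y => s y = -s x) (hs : ∀ x ∈ l, |s x| = 1) :
    |(l.map fun x => s x * a x).sum| = |altSum a l| := by
  cases l with
  | nil => simp [altSum]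
  | cons e t => rw [sum_map_mul_eq_mul_altSum h, abs_mul, hs e List.mem_cons_self, one_mul]

theorem Set.sum_coe_eq_sum_list {α β : Type*} [AddCommMonoid β] {s : Set α} [Fintype s]
    {f : α → β} {l : List α} (hl : l.Nodup) (hls : ∀ x ∈ l, x ∈ s)
    (hf : ∀ x ∈ s, x ∉ l → f x = 0) :
    ∑ x : s, f x = (l.map f).sum := by
  rw [Finset.sum_set_coe, ← List.sum_toFinset f hl]
  refine (Finset.sum_subset (fun x hx => ?_) fun x hx hxl => hf x ?_ ?_).symm
  · simpa using hls x (List.mem_toFinset.mp hx)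
  · simpa using hx
  · simpa using hxl

section

variable {G : SimpleGraph V} {M1 M2 : Set (Sym2 V)} {e f : Sym2 V} {u v : V}

def chiDiff (M1 M2 : Set (Sym2 V)) : Sym2 V → ℝ :=
  M1.indicator 1 - M2.indicator 1

theorem dot_chi_sub_dot_chi [Fintype G.edgeSet] (a : G.edgeSet → ℝ) :
    dot G a (chi G M1) - dot G a (chi G M2) =
      ∑ e : G.edgeSet, chiDiff M1 M2 e * extendE G a e := by
  simp only [dot, chi, chiDiff, extendE, ← Finset.sum_sub_distrib, Pi.sub_apply,
    Set.indicator_apply, Pi.one_apply, Subtype.coe_prop, dif_pos]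
  refine Finset.sum_congr rfl fun e _ => ?_
  split_ifs <;> ring

theorem chiDiff_eq_zero_of_notMem_symmDiff (he : e ∉ M1 ∆ M2) : chiDiff M1 M2 e = 0 := by
  by_cases h1 : e ∈ M1 <;> by_cases h2 : e ∈ M2 <;> simp_all [chiDiff, Set.mem_symmDiff]

theorem abs_chiDiff_of_mem_symmDiff (he : e ∈ M1 ∆ M2) : |chiDiff M1 M2 e| = 1 := by
  rcases he with ⟨h1, h2⟩ | ⟨h2, h1⟩ <;> simp [chiDiff, h1, h2]

theorem chiDiff_eq_neg_of_mem_of_mem (h1 : IsMatchingOf G M1) (h2 : IsMatchingOf G M2)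
    (he : e ∈ M1 ∆ M2) (hf : f ∈ M1 ∆ M2) (hne : e ≠ f) {x : V} (hxe : x ∈ e) (hxf : x ∈ f) :
    chiDiff M1 M2 f = -chiDiff M1 M2 e := by
  rcases he with ⟨he1, he2⟩ | ⟨he2, he1⟩ <;> rcases hf with ⟨hf1, hf2⟩ | ⟨hf2, hf1⟩
  · exact (h1.2 e he1 f hf1 hne x ⟨hxe, hxf⟩).elim
  · simp [chiDiff, he1, he2, hf1, hf2]
  · simp [chiDiff, he1, he2, hf1, hf2]
  · exact (h2.2 e he2 f hf2 hne x ⟨hxe, hxf⟩).elim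

namespace SimpleGraph.Walk

theorem IsTrail.isChain_edges_ne_and_exists_mem {p : G.Walk u v} (hp : p.IsTrail) :
    p.edges.IsChain fun e f => e ≠ f ∧ ∃ x, x ∈ e ∧ x ∈ f := by
  rw [List.isChain_iff_getElem]
  intro i hi
  refine ⟨fun h => by simpa using hp.edges_nodup.getElem_inj_iff.mp h, p.getVert (i + 1), ?_, ?_⟩
    <;> simp [getElem_edges]

def edgesOfParity (p : G.Walk u v) (r : ℕ) : Set (Sym2 V) :=
  {e | ∃ (i : ℕ) (h : i < p.edges.length), i % 2 = r ∧ p.edges[i] = e}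

theorem IsTrail.edgesOfParity_zero_symmDiff_one {p : G.Walk u v} (hp : p.IsTrail) :
    p.edgesOfParity 0 ∆ p.edgesOfParity 1 = {e | e ∈ p.edges} := by
  ext e
  simp only [edgesOfParity, Set.mem_symmDiff, Set.mem_ofPred_eq, List.mem_iff_getElem]
  constructor
  · rintro (⟨⟨i, hi, -, rfl⟩, -⟩ | ⟨⟨i, hi, -, rfl⟩, -⟩) <;> exact ⟨i, hi, rfl⟩
  · rintro ⟨i, hi, rfl⟩
    have hinj : ∀ j (hj : j < p.edges.length), p.edges[j] = p.edges[i] → j = i :=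
      fun j hj h => hp.edges_nodup.getElem_inj_iff.mp h
    rcases Nat.mod_two_eq_zero_or_one i with h | h
    · exact Or.inl ⟨⟨i, hi, h, rfl⟩, fun ⟨j, hj, hj2, h'⟩ => by have := hinj j hj h'; omega⟩
    · exact Or.inr ⟨⟨i, hi, h, rfl⟩, fun ⟨j, hj, hj2, h'⟩ => by have := hinj j hj h'; omega⟩

end SimpleGraph.Walk

namespace IsSimplePathOrEvenCycle

open SimpleGraph.Walk

variable {p : G.Walk u v}

theorem isTrail (hp : IsSimplePathOrEvenCycle G p) : p.IsTrail := by
  rcases hp with ⟨hp, -⟩ | ⟨rfl, hc, -⟩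
  · exact hp.isTrail
  · simpa using hc.isTrail

theorem length_pos (hp : IsSimplePathOrEvenCycle G p) : 0 < p.length := by
  rcases hp with ⟨-, hl⟩ | ⟨rfl, hc, -⟩
  · exact hl
  · have := hc.three_le_length
    rw [length_copy] at this
    omega

theorem getVert_eq_getVert (hp : IsSimplePathOrEvenCycle G p) {i j : ℕ}
    (hi : i ≤ p.length) (hj : j ≤ p.length) (h : p.getVert i = p.getVert j) :
    i = j ∨ p.length % 2 = 0 ∧ (i = 0 ∧ j = p.length ∨ i = p.length ∧ j = 0) := by
  rcases hp with ⟨hp, -⟩ | ⟨rfl, hc, heven⟩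
  · exact Or.inl (hp.getVert_injOn hi hj h)
  · rw [copy_rfl_rfl] at hc
    have hle := hc.three_le_length
    have hpar : p.length % 2 = 0 := Nat.even_iff.mp heven
    by_cases h1 : 1 ≤ i ∧ 1 ≤ j
    · exact Or.inl (hc.getVert_injOn ⟨h1.1, hi⟩ ⟨h1.2, hj⟩ h)
    by_cases h2 : i ≤ p.length - 1 ∧ j ≤ p.length - 1
    · exact Or.inl (hc.getVert_injOn' h2.1 h2.2 h)
    omega

theorem isMatchingOf_edgesOfParity (hp : IsSimplePathOrEvenCycle G p) (r : ℕ) :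
    IsMatchingOf G (p.edgesOfParity r) := by
  refine ⟨?_, ?_⟩
  · rintro _ ⟨i, hi, -, rfl⟩
    exact p.edges_subset_edgeSet (List.getElem_mem hi)
  · rintro _ ⟨i, hi, hir, rfl⟩ _ ⟨j, hj, hjr, rfl⟩ hne x ⟨hxi, hxj⟩
    rw [getElem_edges, Sym2.mem_iff] at hxi hxj
    rw [length_edges] at hi hj
    apply hne
    suffices i = j by subst this; rfl
    rcases hxi with rfl | rfl <;> rcases hxj with h | h <;>
      rcases hp.getVert_eq_getVert (by omega) (by omega) h with h' | h' <;> omega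

theorem adjacentMatchings_edgesOfParity (hp : IsSimplePathOrEvenCycle G p) :
    AdjacentMatchings G (p.edgesOfParity 0) (p.edgesOfParity 1) :=
  ⟨hp.isMatchingOf_edgesOfParity 0, hp.isMatchingOf_edgesOfParity 1, u, v, p, hp,
    hp.isTrail.edgesOfParity_zero_symmDiff_one⟩

theorem edgesOfParity_zero_ne_one (hp : IsSimplePathOrEvenCycle G p) :
    p.edgesOfParity 0 ≠ p.edgesOfParity 1 := by
  intro h
  have hΔ := hp.isTrail.edgesOfParity_zero_symmDiff_one
  rw [h, symmDiff_self] at hΔ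
  obtain ⟨e, he⟩ := List.exists_mem_of_length_pos (p.length_edges ▸ hp.length_pos)
  exact (hΔ ▸ he : e ∈ (⊥ : Set (Sym2 V)))

end IsSimplePathOrEvenCycle

theorem abs_dot_chi_sub_dot_chi [Fintype G.edgeSet] (a : G.edgeSet → ℝ)
    (h1 : IsMatchingOf G M1) (h2 : IsMatchingOf G M2) {p : G.Walk u v} (hp : p.IsTrail)
    (hΔ : M1 ∆ M2 = {e | e ∈ p.edges}) :
    |dot G a (chi G M1) - dot G a (chi G M2)| = |altSum (extendE G a) p.edges| := by
  have hmem : ∀ e, e ∈ M1 ∆ M2 ↔ e ∈ p.edges := fun e => by rw [hΔ]; rfl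
  rw [dot_chi_sub_dot_chi, Set.sum_coe_eq_sum_list (f := fun e => chiDiff M1 M2 e * extendE G a e)
    hp.edges_nodup (fun e he => p.edges_subset_edgeSet he) fun e _ he => by
      rw [chiDiff_eq_zero_of_notMem_symmDiff ((hmem e).not.mpr he), zero_mul]]
  refine abs_sum_map_mul_eq_abs_altSum ?_ fun e he =>
    abs_chiDiff_of_mem_symmDiff ((hmem e).mpr he)
  exact hp.isChain_edges_ne_and_exists_mem.imp_of_mem_imp fun e f he hf ⟨hne, x, hxe, hxf⟩ =>
    chiDiff_eq_neg_of_mem_of_mem h1 h2 ((hmem e).mpr he) ((hmem f).mpr hf) hne hxe hxf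

end

theorem offHyperplanes_iff_dot_ne_general [Fintype V]
    (G : SimpleGraph V) [DecidableRel G.Adj] (a : G.edgeSet → ℝ) :
    OffHyperplanes G a ↔
      ∀ M1 M2 : Set (Sym2 V), AdjacentMatchings G M1 M2 → M1 ≠ M2 →
        dot G a (chi G M1) ≠ dot G a (chi G M2) := by
  constructor
  · rintro hoff M1 M2 ⟨h1, h2, u, v, p, hp, hΔ⟩ - heq
    apply hoff p hp
    rw [← abs_eq_zero, ← abs_dot_chi_sub_dot_chi a h1 h2 hp.isTrail hΔ, heq, sub_self, abs_zero]
  · intro hdot u v p hp hzero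
    have hadj := hp.adjacentMatchings_edgesOfParity
    refine hdot _ _ hadj hp.edgesOfParity_zero_ne_one (sub_eq_zero.mp (abs_eq_zero.mp ?_))
    rw [abs_dot_chi_sub_dot_chi a hadj.1 hadj.2.1 hp.isTrail
      hp.isTrail.edgesOfParity_zero_symmDiff_one, hzero, abs_zero]

/-- `a` lies on no hyperplane of `MA(G)` iff `⟨a, χ_{M1}⟩ ≠ ⟨a, χ_{M2}⟩` for
every pair of adjacent matchings `M1 ≠ M2`. -/
theorem offHyperplanes_iff_dot_ne [Fintype V] [DecidableEq V]
    (G : SimpleGraph V) [DecidableRel G.Adj] (a : G.edgeSet → ℝ) :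
    OffHyperplanes G a ↔
      ∀ M1 M2 : Set (Sym2 V), AdjacentMatchings G M1 M2 → M1 ≠ M2 →
        dot G a (chi G M1) ≠ dot G a (chi G M2) :=
  offHyperplanes_iff_dot_ne_general G a
end
end

section
/- Let G be a finite simple graph with edge set E, and let a, b ∈ ℝ^E each lie on no hyperplane of the matching arrangement MA(G). Suppose a and b induce the same orientation, i.e., for every pair of adjacent matchings M1, M2 of G: ⟨a, χ_{M1}⟩ < ⟨a, χ_{M2}⟩ if and only if ⟨b, χ_{M1}⟩ < ⟨b, χ_{M2}⟩. Then a and b lie in the same region of MA(G), i.e., in the same connected component of ℝ^E minus the union of the hyperplanes of MA(G). -/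
open scoped symmDiff
open Classical

noncomputable section

variable {V : Type*}

/-!
Every point of the segment from `a` to `b` lies off `MA(G)`. The alternating sum of `x` along a
simple path or even cycle `P` is `⟨x, χ_{M₁}⟩ - ⟨x, χ_{M₂}⟩`, where `M₁` and `M₂` are the
matchings formed by the edges of `P` at even and at odd positions; they are adjacent because
`M₁ ∆ M₂` is the edge set of `P`. Hence this linear form has the same nonzero sign at `a` and at
`b`, so it is nonzero on the whole segment, which is connected.
-/

section SplitAlt

open scoped List

variable {α : Type*}

def splitAlt : List α → List α × List α
  | [] => ([], [])
  | e :: l => (e :: (splitAlt l).2, (splitAlt l).1)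

theorem splitAlt_perm (l : List α) : ((splitAlt l).1 ++ (splitAlt l).2).Perm l := by
  induction l with
  | nil => simp [splitAlt]
  | cons e l ih => simpa [splitAlt] using (List.perm_append_comm.trans ih).cons e

theorem splitAlt_sublist (l : List α) : (splitAlt l).1 <+ l ∧ (splitAlt l).2 <+ l := by
  induction l with
  | nil => simp [splitAlt]
  | cons e l ih => exact ⟨ih.2.cons_cons e, ih.1.cons e⟩

theorem splitAlt_snd_sublist_tail (l : List α) : (splitAlt l).2 <+ l.tail := by
  cases l with
  | nil => simp [splitAlt]
  | cons e l => exact (splitAlt_sublist l).1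

theorem splitAlt_snd_sublist_dropLast :
    ∀ {l : List α}, Odd l.length → (splitAlt l).2 <+ l.dropLast
  | [], h => by simp at h
  | [_], _ => by simp [splitAlt]
  | a :: b :: l, h => by
    have hl : Odd l.length := by simpa [Nat.odd_add_one] using h
    have hne : l ≠ [] := List.ne_nil_of_length_pos hl.pos
    simp only [splitAlt, List.dropLast_cons_cons, List.dropLast_cons_of_ne_nil hne]
    exact ((splitAlt_snd_sublist_dropLast hl).cons_cons b).cons a

theorem altSum_eq_sum_sub_sum (f : α → ℝ) (l : List α) :
    altSum f l = ((splitAlt l).1.map f).sum - ((splitAlt l).2.map f).sum := by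
  induction l with
  | nil => simp [altSum, splitAlt]
  | cons e l ih => simp only [altSum, splitAlt, ih, List.map_cons, List.sum_cons]; ring

end SplitAlt

section VertexDisjoint

variable {G : SimpleGraph V}

def VertexDisjoint (e f : Sym2 V) : Prop :=
  ∀ v : V, ¬(v ∈ e ∧ v ∈ f)

theorem VertexDisjoint.symm {e f : Sym2 V} (h : VertexDisjoint e f) : VertexDisjoint f e :=
  fun v hv => h v hv.symm

instance : Std.Symm (VertexDisjoint (V := V)) :=
  ⟨fun _ _ => VertexDisjoint.symm⟩

theorem isMatchingOf_setOf_mem {l : List (Sym2 V)} (hG : ∀ e ∈ l, e ∈ G.edgeSet)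
    (hl : l.Pairwise VertexDisjoint) : IsMatchingOf G {e | e ∈ l} :=
  ⟨hG, fun _ he _ hf hne => hl.forall he hf hne⟩

end VertexDisjoint

theorem setOf_mem_symmDiff_setOf_mem {α : Type*} {l₁ l₂ : List α} (h : (l₁ ++ l₂).Nodup) :
    {x | x ∈ l₁} ∆ {x | x ∈ l₂} = {x | x ∈ l₁ ++ l₂} := by
  have hdisj : Disjoint {x | x ∈ l₁} {x | x ∈ l₂} :=
    Set.disjoint_left.mpr fun _ h₁ h₂ => (List.nodup_append'.mp h).2.2 h₁ h₂
  rw [hdisj.symmDiff_eq_sup]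
  ext x
  simp

namespace SimpleGraph.Walk

variable {G : SimpleGraph V}

theorem IsPath.start_not_mem_of_mem_tail_edges {u v : V} {p : G.Walk u v} (hp : p.IsPath)
    {e : Sym2 V} (he : e ∈ p.edges.tail) : u ∉ e := by
  cases p with
  | nil => simp at he
  | cons h q =>
    intro hu
    exact ((cons_isPath_iff h q).mp hp).2 (mem_support_of_mem_edges (by simpa using he) hu)

theorem IsPath.end_not_mem_of_mem_dropLast_edges {u v : V} {p : G.Walk u v} (hp : p.IsPath)
    {e : Sym2 V} (he : e ∈ p.edges.dropLast) : v ∉ e := by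
  refine hp.reverse.start_not_mem_of_mem_tail_edges ?_
  rwa [edges_reverse, List.tail_reverse, List.mem_reverse]

theorem IsPath.pairwise_splitAlt_edges {u v : V} {p : G.Walk u v} (hp : p.IsPath) :
    (splitAlt p.edges).1.Pairwise VertexDisjoint ∧
      (splitAlt p.edges).2.Pairwise VertexDisjoint := by
  induction p with
  | nil => simp [splitAlt]
  | @cons x y z h q ih =>
    obtain ⟨hq, hxq⟩ := (cons_isPath_iff h q).mp hp
    refine ⟨List.pairwise_cons.mpr ⟨?_, (ih hq).2⟩, (ih hq).1⟩
    intro f hf w ⟨hwxy, hwf⟩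
    rcases Sym2.mem_iff.mp hwxy with rfl | rfl
    · exact hxq (mem_support_of_mem_edges ((splitAlt_sublist _).2.subset hf) hwf)
    · exact hq.start_not_mem_of_mem_tail_edges ((splitAlt_snd_sublist_tail _).subset hf) hwf

theorem IsCycle.pairwise_splitAlt_edges {u : V} {p : G.Walk u u} (hp : p.IsCycle)
    (he : Even p.length) :
    (splitAlt p.edges).1.Pairwise VertexDisjoint ∧
      (splitAlt p.edges).2.Pairwise VertexDisjoint := by
  cases p with
  | nil => exact absurd rfl hp.ne_nil
  | cons h q =>
    have hq := ((cons_isCycle_iff q h).mp hp).1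
    have hodd : Odd q.edges.length := by simpa [Nat.even_add_one] using he
    refine ⟨List.pairwise_cons.mpr ⟨?_, hq.pairwise_splitAlt_edges.2⟩,
      hq.pairwise_splitAlt_edges.1⟩
    -- `q` has odd length, so its last edge, the only one containing `u`, sits at an even position.
    intro f hf w ⟨hwe, hwf⟩
    rcases Sym2.mem_iff.mp hwe with rfl | rfl
    · exact hq.end_not_mem_of_mem_dropLast_edges
        ((splitAlt_snd_sublist_dropLast hodd).subset hf) hwf
    · exact hq.start_not_mem_of_mem_tail_edges ((splitAlt_snd_sublist_tail _).subset hf) hwf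

end SimpleGraph.Walk

section MatchingValues

variable {G : SimpleGraph V} [Fintype G.edgeSet]

theorem dot_smul_add_smul (s t : ℝ) (a b x : G.edgeSet → ℝ) :
    dot G (s • a + t • b) x = s * dot G a x + t * dot G b x := by
  simp only [dot, Pi.add_apply, Pi.smul_apply, smul_eq_mul, add_mul, Finset.sum_add_distrib,
    Finset.mul_sum, mul_assoc]

theorem sum_map_extendE {l : List (Sym2 V)} (hl : l.Nodup) (hG : ∀ e ∈ l, e ∈ G.edgeSet)
    (c : G.edgeSet → ℝ) : (l.map (extendE G c)).sum = dot G c (chi G {e | e ∈ l}) := by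
  rw [← List.sum_toFinset _ hl]
  simp only [dot, chi, Set.mem_ofPred_eq, mul_ite, mul_one, mul_zero]
  rw [← Finset.sum_filter]
  symm
  refine Finset.sum_bij (fun e _ => (e : Sym2 V)) ?_ ?_ ?_ ?_
  · intro e he
    simpa using he
  · intro e _ f _ h
    exact Subtype.ext h
  · intro e he
    have he' : e ∈ l := List.mem_toFinset.mp he
    exact ⟨⟨e, hG e he'⟩, by simpa using he', rfl⟩
  · intro e _
    simp [extendE]

end MatchingValues

section PathsAndCycles

variable {G : SimpleGraph V} {u v : V} {p : G.Walk u v}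

theorem IsSimplePathOrEvenCycle.edges_nodup (hp : IsSimplePathOrEvenCycle G p) : p.edges.Nodup := by
  rcases hp with ⟨hp, _⟩ | ⟨rfl, hc, _⟩
  · exact hp.edges_nodup
  · simpa using hc.edges_nodup

theorem IsSimplePathOrEvenCycle.pairwise_splitAlt_edges (hp : IsSimplePathOrEvenCycle G p) :
    (splitAlt p.edges).1.Pairwise VertexDisjoint ∧
      (splitAlt p.edges).2.Pairwise VertexDisjoint := by
  rcases hp with ⟨hp, _⟩ | ⟨rfl, hc, he⟩
  · exact hp.pairwise_splitAlt_edges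
  · exact (by simpa using hc : p.IsCycle).pairwise_splitAlt_edges he

theorem IsSimplePathOrEvenCycle.adjacentMatchings_splitAlt_edges
    (hp : IsSimplePathOrEvenCycle G p) :
    AdjacentMatchings G {e | e ∈ (splitAlt p.edges).2} {e | e ∈ (splitAlt p.edges).1} := by
  have hG : ∀ e ∈ p.edges, e ∈ G.edgeSet := fun _ he => p.edges_subset_edgeSet he
  obtain ⟨h₁, h₂⟩ := hp.pairwise_splitAlt_edges
  refine ⟨isMatchingOf_setOf_mem (fun e he => hG e ((splitAlt_sublist _).2.subset he)) h₂,
    isMatchingOf_setOf_mem (fun e he => hG e ((splitAlt_sublist _).1.subset he)) h₁,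
    u, v, p, hp, ?_⟩
  rw [symmDiff_comm,
    setOf_mem_symmDiff_setOf_mem ((splitAlt_perm p.edges).nodup_iff.mpr hp.edges_nodup)]
  ext e
  exact (splitAlt_perm p.edges).mem_iff

variable [Fintype G.edgeSet]

theorem IsSimplePathOrEvenCycle.altSum_extendE_eq (hp : IsSimplePathOrEvenCycle G p)
    (c : G.edgeSet → ℝ) :
    altSum (extendE G c) p.edges = dot G c (chi G {e | e ∈ (splitAlt p.edges).1}) -
      dot G c (chi G {e | e ∈ (splitAlt p.edges).2}) := by
  have hnodup := List.nodup_append'.mp ((splitAlt_perm p.edges).nodup_iff.mpr hp.edges_nodup)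
  have hG : ∀ e ∈ p.edges, e ∈ G.edgeSet := fun _ he => p.edges_subset_edgeSet he
  rw [altSum_eq_sum_sub_sum,
    sum_map_extendE hnodup.1 (fun e he => hG e ((splitAlt_sublist _).1.subset he)),
    sum_map_extendE hnodup.2.1 (fun e he => hG e ((splitAlt_sublist _).2.subset he))]

theorem IsSimplePathOrEvenCycle.altSum_extendE_smul_add_smul (hp : IsSimplePathOrEvenCycle G p)
    (s t : ℝ) (a b : G.edgeSet → ℝ) :
    altSum (extendE G (s • a + t • b)) p.edges =
      s * altSum (extendE G a) p.edges + t * altSum (extendE G b) p.edges := by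
  simp only [hp.altSum_extendE_eq, dot_smul_add_smul]
  ring

theorem SameOrientation.altSum_pos_iff {a b : G.edgeSet → ℝ} (hab : SameOrientation G a b)
    (hp : IsSimplePathOrEvenCycle G p) :
    0 < altSum (extendE G a) p.edges ↔ 0 < altSum (extendE G b) p.edges := by
  simpa only [hp.altSum_extendE_eq, sub_pos] using hab _ _ hp.adjacentMatchings_splitAlt_edges

end PathsAndCycles

theorem mul_add_mul_ne_zero_of_pos_iff_pos {s t A B : ℝ} (hs : 0 ≤ s) (ht : 0 ≤ t)
    (hst : s + t = 1) (hA : A ≠ 0) (hB : B ≠ 0) (hAB : 0 < A ↔ 0 < B) :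
    s * A + t * B ≠ 0 := by
  rcases hA.lt_or_gt with hA | hA
  · have hB : B < 0 := hB.lt_or_gt.resolve_right fun hB => hA.not_gt (hAB.mpr hB)
    exact (show s * A + t * B < 0 from convex_Iio (0 : ℝ) hA hB hs ht hst).ne
  · exact (show 0 < s * A + t * B from convex_Ioi (0 : ℝ) hA (hAB.mp hA) hs ht hst).ne'

theorem sameRegion_of_sameOrientation_general [Fintype V]
    (G : SimpleGraph V) [DecidableRel G.Adj] (a b : G.edgeSet → ℝ)
    (ha : OffHyperplanes G a) (hb : OffHyperplanes G b)
    (hab : SameOrientation G a b) :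
    b ∈ connectedComponentIn {x : G.edgeSet → ℝ | OffHyperplanes G x} a := by
  have hsegment : segment ℝ a b ⊆ {x | OffHyperplanes G x} := by
    rintro _ ⟨s, t, hs, ht, hst, rfl⟩ u v p hp
    rw [hp.altSum_extendE_smul_add_smul]
    exact mul_add_mul_ne_zero_of_pos_iff_pos hs ht hst (ha p hp) (hb p hp) (hab.altSum_pos_iff hp)
  exact (convex_segment a b).isPreconnected.subset_connectedComponentIn
    (left_mem_segment ℝ a b) hsegment (right_mem_segment ℝ a b)

/-- If `a` and `b` lie on no hyperplane of `MA(G)` and induce the same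
orientation, then they lie in the same region of `MA(G)`. -/
theorem sameRegion_of_sameOrientation [Fintype V] [DecidableEq V]
    (G : SimpleGraph V) [DecidableRel G.Adj] (a b : G.edgeSet → ℝ)
    (ha : OffHyperplanes G a) (hb : OffHyperplanes G b)
    (hab : SameOrientation G a b) :
    b ∈ connectedComponentIn {x : G.edgeSet → ℝ | OffHyperplanes G x} a :=
  sameRegion_of_sameOrientation_general G a b ha hb hab
end
end
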